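/- For every j with 1 ≤ j ≤ n, every index i, and every integer a with gcd(a, p) = 1, one has T_i^(p^j)(α_j^a) + T_((i + d_j/2) mod d_j)^(p^j)(α_j^a) = 1 in ᾱ. -/

import Mathlib

/-!
Pairing `H_k` with `H_{k + d/2}` covers all `d` cyclotomic classes of level `p^m` exactly
once, so at a primitive `p^m`-th root of unity `γ` their sum is `∑ γ^u` over all units `u`
modulo `p^m`: a primitive root modulo `p²` is a primitive root modulo every `p^m`, so the `g^s`,
`s < φ(p^m)`, run through these units. This sum of the primitive `p^m`-th roots of unity is
`μ(p^m)`, i.e. `-1 = 1` in characteristic `2` for `m = 1` and `0` for `m ≥ 2`. Since `α_j^a`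
raised to `p^l` is a primitive `p^(j-l)`-th root, only the last level `l = j - 1` of `T`
contributes.
-/

/-- The generalized cyclotomic class `D_i^(p^j)` of order `d_j = p^(j-1)·(p-1)/e`
with respect to a primitive root `g`:
`D_i^(p^j) = { g^(d_j·t + i) mod p^j : 0 ≤ t < e }`. -/
def Dclass (p e g j i : ℕ) : Set (ZMod (p ^ j)) :=
  {x | ∃ t < e, x = (g : ZMod (p ^ j)) ^ (p ^ (j - 1) * ((p - 1) / e) * t + i)}

/-- `E_l^(p^j)(x) = Σ_{i ∈ D_l^(p^j)} x^i`, exponents being the integer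
representatives `g^(d_j·t + l) mod p^j ∈ [0, p^j)` of the elements of `D_l^(p^j)`. -/
noncomputable def Epoly (p e g j l : ℕ) (x : AlgebraicClosure (ZMod 2)) :
    AlgebraicClosure (ZMod 2) :=
  ∑ t ∈ Finset.range e, x ^ (g ^ (p ^ (j - 1) * ((p - 1) / e) * t + l) % p ^ j)

/-- `H_k^(p^j)(x) = Σ_{i=0}^{d_j/2-1} E_((i+k) mod d_j)^(p^j)(x)`. -/
noncomputable def Hpoly (p e g j k : ℕ) (x : AlgebraicClosure (ZMod 2)) :
    AlgebraicClosure (ZMod 2) :=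
  ∑ i ∈ Finset.range (p ^ (j - 1) * ((p - 1) / e) / 2),
    Epoly p e g j ((i + k) % (p ^ (j - 1) * ((p - 1) / e))) x

/-- `T_k^(p^j)(x) = H_k^(p^j)(x) + H_k^(p^(j-1))(x^p) + ⋯ + H_k^(p)(x^(p^(j-1)))`. -/
noncomputable def Tpoly (p e g j k : ℕ) (x : AlgebraicClosure (ZMod 2)) :
    AlgebraicClosure (ZMod 2) :=
  ∑ l ∈ Finset.range j, Hpoly p e g (j - l) k (x ^ p ^ l)

open Finset
open scoped Nat

namespace Finset

variable {M : Type*} [AddCommMonoid M]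

theorem sum_range_add_mod (f : ℕ → M) (d k : ℕ) :
    ∑ i ∈ range d, f ((i + k) % d) = ∑ i ∈ range d, f i := by
  rcases Nat.eq_zero_or_pos d with rfl | hd
  · simp
  have : NeZero d := ⟨hd.ne'⟩
  rw [← Fin.sum_univ_eq_sum_range (fun i => f ((i + k) % d)), ← Fin.sum_univ_eq_sum_range f]
  exact Fintype.sum_equiv (Equiv.addRight (Fin.ofNat d k)) _ _ fun i => by simp [Fin.val_add]

theorem sum_range_mul (f : ℕ → M) (d e : ℕ) :
    ∑ s ∈ range (d * e), f s = ∑ t ∈ range e, ∑ l ∈ range d, f (d * t + l) := by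
  induction e with
  | zero => simp
  | succ e ih => rw [Nat.mul_succ, sum_range_add, ih, sum_range_succ]

theorem sum_range_mul_filter_dvd (f : ℕ → M) {p : ℕ} (hp : 0 < p) (k : ℕ) :
    ∑ u ∈ range (p * k) with p ∣ u, f u = ∑ v ∈ range k, f (p * v) := by
  have hmul : {u ∈ range (p * k) | p ∣ u} = (range k).image (p * ·) := by
    ext u
    simp only [mem_filter, mem_range, mem_image]
    constructor
    · rintro ⟨hu, v, rfl⟩
      exact ⟨v, Nat.lt_of_mul_lt_mul_left hu, rfl⟩
    · rintro ⟨v, hv, rfl⟩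
      exact ⟨Nat.mul_lt_mul_of_pos_left hv hp, dvd_mul_right p v⟩
  rw [hmul, sum_image fun _ _ _ _ h => Nat.eq_of_mul_eq_mul_left hp h]

end Finset

theorem Nat.add_mul_half_mod_modEq {c d : ℕ} (hc : Odd c) (hd : Even d) (i : ℕ) :
    (i + c * d / 2) % (c * d) ≡ i + d / 2 [MOD d] := by
  obtain ⟨w, rfl⟩ := hc
  obtain ⟨h, rfl⟩ := hd
  have hhalf : (2 * w + 1) * (h + h) / 2 = h + w * (h + h) := by
    rw [show (2 * w + 1) * (h + h) = 2 * (h + w * (h + h)) by ring,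
      Nat.mul_div_cancel_left _ two_pos]
  rw [Nat.ModEq, Nat.mod_mod_of_dvd _ (dvd_mul_left _ _), hhalf, ← add_assoc,
    Nat.add_mul_mod_self_right, show (h + h) / 2 = h by omega]

theorem IsPrimitiveRoot.pow_prime_pow {R : Type*} [CommMonoid R] {ζ : R} {p n : ℕ}
    (hζ : IsPrimitiveRoot ζ (p ^ n)) (hp : 0 < p) {k : ℕ} (hk : k ≤ n) :
    IsPrimitiveRoot (ζ ^ p ^ k) (p ^ (n - k)) :=
  hζ.pow (by positivity) (by rw [← pow_add, Nat.add_sub_cancel' hk])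

theorem Nat.Coprime.of_orderOf_natCast_eq_totient {g n : ℕ} (hn : 0 < n)
    (hg : orderOf (g : ZMod n) = φ n) : g.Coprime n := by
  rw [← ZMod.isUnit_iff_coprime]
  exact (orderOf_pos_iff.mp (hg ▸ Nat.totient_pos.mpr hn)).isUnit

theorem ZMod.orderOf_natCast_dvd_totient {g n : ℕ} (hg : g.Coprime n) :
    orderOf (g : ZMod n) ∣ φ n := by
  apply orderOf_dvd_of_pow_eq_one
  rw [← ZMod.coe_unitOfCoprime g hg, ← Units.val_pow_eq_pow_val, ZMod.pow_totient,
    Units.val_one]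

theorem ZMod.orderOf_natCast_dvd_of_dvd {n N : ℕ} (h : n ∣ N) (g : ℕ) :
    orderOf (g : ZMod n) ∣ orderOf (g : ZMod N) := by
  simpa using orderOf_map_dvd (ZMod.castHom h (ZMod n)).toMonoidHom (g : ZMod N)

theorem Finset.sum_pow_mod_eq_sum_coprime {M : Type*} [AddCommMonoid M] {g n : ℕ} (hn : 0 < n)
    (hg : orderOf (g : ZMod n) = φ n) (f : ℕ → M) :
    ∑ s ∈ range (φ n), f (g ^ s % n) = ∑ u ∈ range n with n.Coprime u, f u := by
  have hinj : Set.InjOn (fun s => g ^ s % n) (range (φ n)) := by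
    intro s hs t ht hst
    apply pow_injOn_Iio_orderOf (x := (g : ZMod n))
      (by simpa [hg] using hs) (by simpa [hg] using ht)
    simpa using (ZMod.natCast_eq_natCast_iff' _ _ _).mpr hst
  have himage : (range (φ n)).image (fun s => g ^ s % n) = {u ∈ range n | n.Coprime u} := by
    refine eq_of_subset_of_card_le (fun u hu => ?_) ?_
    · obtain ⟨s, -, rfl⟩ := mem_image.mp hu
      refine mem_filter.mpr ⟨mem_range.mpr (Nat.mod_lt _ hn), Nat.Coprime.symm ?_⟩
      rw [← ZMod.isUnit_iff_coprime, ZMod.natCast_mod, Nat.cast_pow]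
      exact ((ZMod.isUnit_iff_coprime g n).mpr (.of_orderOf_natCast_eq_totient hn hg)).pow s
    · rw [card_image_of_injOn hinj, card_range, Nat.totient_eq_card_coprime]
  rw [← himage, sum_image hinj]

theorem IsPrimitiveRoot.sum_pow_coprime_prime_pow {R : Type*} [CommRing R] [IsDomain R] {ζ : R}
    {p m : ℕ} (hp : p.Prime) (hm : 1 ≤ m) (hζ : IsPrimitiveRoot ζ (p ^ m)) :
    ∑ u ∈ range (p ^ m) with (p ^ m).Coprime u, ζ ^ u = if m = 1 then -1 else 0 := by
  obtain ⟨k, rfl⟩ := Nat.exists_eq_add_of_le' hm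
  have hcop : ∀ u, (p ^ (k + 1)).Coprime u ↔ ¬ p ∣ u := fun u => by
    rw [Nat.coprime_pow_left_iff k.succ_pos, hp.coprime_iff_not_dvd]
  have hsplit := sum_filter_not_add_sum_filter (range (p ^ (k + 1))) (p ∣ ·) (ζ ^ ·)
  rw [hζ.geom_sum_eq_zero (Nat.one_lt_pow k.succ_ne_zero hp.one_lt), pow_succ',
    sum_range_mul_filter_dvd _ hp.pos, ← pow_succ'] at hsplit
  simp only [hcop, eq_neg_of_add_eq_zero_left hsplit, pow_mul]
  rcases k with _ | k
  · simp
  · rw [(hζ.pow (pow_pos hp.pos _) (pow_succ' p _)).geom_sum_eq_zero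
      (Nat.one_lt_pow k.succ_ne_zero hp.one_lt)]
    simp

section PrimitiveRootModPrimePow

variable {p g : ℕ} (hp : p.Prime) (hg : orderOf (g : ZMod (p ^ 2)) = φ (p ^ 2))
include hp hg

theorem Nat.Coprime.of_orderOf_natCast_zmod_sq_eq_totient : g.Coprime p :=
  (Nat.Coprime.of_orderOf_natCast_eq_totient (pow_pos hp.pos 2) hg).coprime_dvd_right
    (dvd_pow_self p two_ne_zero)

theorem sub_one_dvd_orderOf_natCast_zmod_prime : p - 1 ∣ orderOf (g : ZMod p) := by
  set o := orderOf (g : ZMod p)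
  have hpo : (p : ℤ) ∣ (g : ℤ) ^ o - 1 := by
    rw [← ZMod.intCast_zmod_eq_zero_iff_dvd]
    push_cast
    rw [pow_orderOf_eq_one, sub_self]
  have hsq : (g : ZMod (p ^ 2)) ^ (o * p) = 1 := by
    have hdvd : ((p ^ 2 : ℕ) : ℤ) ∣ (g : ℤ) ^ (o * p) - 1 := by
      simpa [pow_mul] using dvd_sub_pow_of_dvd_sub hpo 1
    have := (ZMod.intCast_zmod_eq_zero_iff_dvd _ _).mpr hdvd
    push_cast at this
    exact sub_eq_zero.mp this
  have := orderOf_dvd_of_pow_eq_one hsq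
  rw [hg, Nat.totient_prime_pow_succ hp, pow_one, mul_comm o] at this
  exact Nat.dvd_of_mul_dvd_mul_left hp.pos this

theorem pow_dvd_orderOf_natCast_zmod_prime_pow (hp2 : p ≠ 2) (m : ℕ) :
    p ^ m ∣ orderOf (g : ZMod (p ^ (m + 1))) := by
  have := Fact.mk hp
  -- `g ^ (p - 1) = 1 + p * a` with `p ∤ a`, whose order modulo `p ^ (m + 1)` is `p ^ m`.
  have hg0 : (g : ZMod p) ≠ 0 := ((ZMod.isUnit_iff_coprime g p).mpr
    (.of_orderOf_natCast_zmod_sq_eq_totient hp hg)).ne_zero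
  obtain ⟨a, ha⟩ : (p : ℤ) ∣ (g : ℤ) ^ (p - 1) - 1 := by
    rw [← ZMod.intCast_zmod_eq_zero_iff_dvd]
    push_cast
    rw [ZMod.pow_card_sub_one_eq_one hg0, sub_self]
  have hpa : ¬ (p : ℤ) ∣ a := by
    rintro ⟨b, rfl⟩
    have hsq : (g : ZMod (p ^ 2)) ^ (p - 1) = 1 := by
      have := (ZMod.intCast_zmod_eq_zero_iff_dvd ((g : ℤ) ^ (p - 1) - 1) (p ^ 2)).mpr
        ⟨b, by rw [ha]; push_cast; ring⟩
      push_cast at this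
      exact sub_eq_zero.mp this
    have := Nat.le_of_dvd (Nat.sub_pos_of_lt hp.one_lt) (hg ▸ orderOf_dvd_of_pow_eq_one hsq)
    rw [Nat.totient_prime_pow_succ hp, pow_one] at this
    nlinarith [hp.two_le, Nat.sub_pos_of_lt hp.one_lt]
  have hlift : (g : ZMod (p ^ (m + 1))) ^ (p - 1) = 1 + p * a := by
    rw [← sub_eq_iff_eq_add']
    exact_mod_cast congrArg (Int.cast : ℤ → ZMod (p ^ (m + 1))) ha
  rw [← ZMod.orderOf_one_add_mul_prime hp hp2 a hpa m, ← hlift]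
  exact orderOf_pow_dvd _

theorem orderOf_natCast_zmod_prime_pow (hp2 : p ≠ 2) {m : ℕ} (hm : 1 ≤ m) :
    orderOf (g : ZMod (p ^ m)) = φ (p ^ m) := by
  obtain ⟨k, rfl⟩ := Nat.exists_eq_add_of_le' hm
  have hcop := Nat.Coprime.of_orderOf_natCast_zmod_sq_eq_totient hp hg
  refine Nat.dvd_antisymm (ZMod.orderOf_natCast_dvd_totient (hcop.pow_right _)) ?_
  rw [Nat.totient_prime_pow_succ hp]
  refine Nat.Coprime.mul_dvd_of_dvd_of_dvd ?_ (pow_dvd_orderOf_natCast_zmod_prime_pow hp hg hp2 k)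
    ((sub_one_dvd_orderOf_natCast_zmod_prime hp hg).trans
      (ZMod.orderOf_natCast_dvd_of_dvd (Dvd.intro_left _ (pow_succ p k).symm) g))
  exact ((Nat.coprime_self_sub_right hp.one_lt.le).mpr (Nat.coprime_one_right p)).pow_left k

end PrimitiveRootModPrimePow

/-- The paper's `d_j = φ(p^j)/e`, the number of cyclotomic classes modulo `p^j`. -/
def numClasses (p e j : ℕ) : ℕ := p ^ (j - 1) * ((p - 1) / e)

section CyclotomicClasses

variable {p e g : ℕ}

theorem even_numClasses {r : ℕ} (hr : 1 ≤ r) (hf : (p - 1) / e = 2 ^ r) (m : ℕ) :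
    Even (numClasses p e m) := by
  rw [numClasses, hf]
  exact (Nat.even_pow.mpr ⟨even_two, by omega⟩).mul_left _

theorem numClasses_mul_eq_totient (hp : p.Prime) (hef : e ∣ p - 1) {m : ℕ} (hm : 1 ≤ m) :
    numClasses p e m * e = φ (p ^ m) := by
  rw [numClasses, mul_assoc, Nat.div_mul_cancel hef, Nat.totient_prime_pow hp hm]

theorem numClasses_eq_pow_mul {j l : ℕ} (hl : l < j) :
    numClasses p e j = p ^ l * numClasses p e (j - l) := by
  rw [numClasses, numClasses, ← mul_assoc, ← pow_add]
  congr 2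
  omega

theorem Hpoly_congr {m k k' : ℕ} (h : k ≡ k' [MOD numClasses p e m]) :
    Hpoly p e g m k = Hpoly p e g m k' := by
  funext x
  exact sum_congr rfl fun i _ => congrArg (Epoly p e g m · x) (h.add_left i)

theorem Hpoly_add_Hpoly_add_half {m : ℕ} (hd : Even (numClasses p e m)) (k : ℕ)
    (x : AlgebraicClosure (ZMod 2)) :
    Hpoly p e g m k x + Hpoly p e g m (k + numClasses p e m / 2) x
      = ∑ l ∈ range (numClasses p e m), Epoly p e g m l x := by
  set d := numClasses p e m
  have hhalves := sum_range_add (fun i => Epoly p e g m ((i + k) % d) x) (d / 2) (d / 2)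
  rw [show d / 2 + d / 2 = d by obtain ⟨h, hh⟩ := hd; omega] at hhalves
  rw [← sum_range_add_mod (Epoly p e g m · x) d k, hhalves]
  refine congrArg _ (sum_congr rfl fun i _ => ?_)
  show Epoly p e g m ((i + (k + d / 2)) % d) x = Epoly p e g m ((d / 2 + i + k) % d) x
  ring_nf

theorem sum_range_numClasses_Epoly (m : ℕ) (x : AlgebraicClosure (ZMod 2)) :
    ∑ l ∈ range (numClasses p e m), Epoly p e g m l x
      = ∑ s ∈ range (numClasses p e m * e), x ^ (g ^ s % p ^ m) := by
  rw [sum_range_mul, sum_comm]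
  rfl

theorem Hpoly_add_Hpoly_add_half_eq_ite (hp : p.Prime) (hp2 : p ≠ 2) (hef : e ∣ p - 1)
    (hg : orderOf (g : ZMod (p ^ 2)) = φ (p ^ 2)) {m : ℕ} (hm : 1 ≤ m)
    (hd : Even (numClasses p e m)) {γ : AlgebraicClosure (ZMod 2)}
    (hγ : IsPrimitiveRoot γ (p ^ m)) (k : ℕ) :
    Hpoly p e g m k γ + Hpoly p e g m (k + numClasses p e m / 2) γ = if m = 1 then 1 else 0 := by
  rw [Hpoly_add_Hpoly_add_half hd, sum_range_numClasses_Epoly,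
    numClasses_mul_eq_totient hp hef hm,
    sum_pow_mod_eq_sum_coprime (pow_pos hp.pos m) (orderOf_natCast_zmod_prime_pow hp hg hp2 hm),
    hγ.sum_pow_coprime_prime_pow hp hm, CharTwo.neg_eq]

end CyclotomicClasses

theorem Tpoly_complement_general
    (p : ℕ) (hp : p.Prime) (hodd : Odd p)
    (e r : ℕ) (hef : e ∣ p - 1) (hr : 1 ≤ r) (hf : (p - 1) / e = 2 ^ r)
    (g : ℕ) (hg : orderOf (g : ZMod (p ^ 2)) = Nat.totient (p ^ 2))
    (n j : ℕ) (hj : 1 ≤ j) (hjn : j ≤ n)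
    (α : AlgebraicClosure (ZMod 2)) (hα : IsPrimitiveRoot α (p ^ n))
    (a : ℕ) (ha : Nat.gcd a p = 1) :
    ∀ i : ℕ,
      Tpoly p e g j i ((α ^ p ^ (n - j)) ^ a)
        + Tpoly p e g j
            ((i + p ^ (j - 1) * ((p - 1) / e) / 2) % (p ^ (j - 1) * ((p - 1) / e)))
            ((α ^ p ^ (n - j)) ^ a)
        = 1 := by
  intro i
  set x := (α ^ p ^ (n - j)) ^ a
  change Tpoly p e g j i x + Tpoly p e g j ((i + numClasses p e j / 2) % numClasses p e j) x = 1
  have hx : IsPrimitiveRoot x (p ^ j) := by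
    have hαj := hα.pow_prime_pow hp.pos (n.sub_le j)
    rw [Nat.sub_sub_self hjn] at hαj
    exact hαj.pow_of_coprime a (Nat.Coprime.pow_right j ha)
  have hlevel : ∀ l < j, Hpoly p e g (j - l) i (x ^ p ^ l)
      + Hpoly p e g (j - l) ((i + numClasses p e j / 2) % numClasses p e j) (x ^ p ^ l)
      = if j - l = 1 then 1 else 0 := by
    intro l hl
    have hindex := Nat.add_mul_half_mod_modEq (hodd.pow (n := l)) (even_numClasses hr hf (j - l)) i
    rw [← numClasses_eq_pow_mul hl] at hindex
    rw [Hpoly_congr hindex]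
    exact Hpoly_add_Hpoly_add_half_eq_ite hp (hodd.ne_two_of_dvd_nat dvd_rfl) hef hg (by omega)
      (even_numClasses hr hf _) (hx.pow_prime_pow hp.pos hl.le) i
  simp only [Tpoly, ← sum_add_distrib]
  rw [sum_eq_single_of_mem (j - 1) (mem_range.mpr (by omega))
    fun l hl hne => by rw [hlevel l (mem_range.mp hl), if_neg (by omega)]]
  rw [hlevel _ (by omega), if_pos (by omega)]

/-- for `1 ≤ j ≤ n`, every index `i` and every `a` coprime to `p`,
`T_i^(p^j)(α_j^a) + T_((i+d_j/2) mod d_j)^(p^j)(α_j^a) = 1` in `ᾱ`.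
Here `α_j = α_n^(p^(n-j))` and `d_j = p^(j-1)·(p-1)/e`. -/
theorem Tpoly_complement
    (p : ℕ) (hp : p.Prime) (hodd : Odd p)
    (e r : ℕ) (he : 0 < e) (hef : e ∣ p - 1) (hr : 1 ≤ r) (hf : (p - 1) / e = 2 ^ r)
    (g : ℕ) (hg : orderOf (g : ZMod (p ^ 2)) = Nat.totient (p ^ 2))
    (n j : ℕ) (hj : 1 ≤ j) (hjn : j ≤ n)
    (α : AlgebraicClosure (ZMod 2)) (hα : IsPrimitiveRoot α (p ^ n))
    (a : ℕ) (ha : Nat.gcd a p = 1) :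
    ∀ i : ℕ,
      Tpoly p e g j i ((α ^ p ^ (n - j)) ^ a)
        + Tpoly p e g j
            ((i + p ^ (j - 1) * ((p - 1) / e) / 2) % (p ^ (j - 1) * ((p - 1) / e)))
            ((α ^ p ^ (n - j)) ^ a)
        = 1 :=
  Tpoly_complement_general p hp hodd e r hef hr hf g hg n j hj hjn α hα a ha
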